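/- Let (r_n), (u_n), (v_n) be positive real sequences satisfying r_n(v_{n+1}u_n - u_{n+1}v_n) = 1 for all n ≥ 0, with ∑_{k}^∞ 1/(r_k u_k u_{k+1}) divergent, and let (σ_n) be a complex sequence such that the series J = ∑_{n=0}^∞ σ_n u_n v_n converges (possibly conditionally). Set J_m = ∑_{k=m}^∞ σ_k u_k v_k and A_n = sup_{m≥n} |J_m|. Assume also u_n/v_n = ∑_{k=n}^∞ 1/(r_k v_k v_{k+1}) for all n. Then for each n the series R_n = ∑_{k=n}^∞ σ_k u_k^2 converges, and the quantity C_n = (v_n/u_n) R_n satisfies |C_n| ≤ 2 A_n. -/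

import Mathlib

/-!
Abel summation against the tails `J_m` of `∑ σ_k u_k v_k`: with `w_k = u_k / v_k`,
`σ_k u_k² = w_k (J_k - J_{k+1})`, and `w` is the tail sum of the positive series
`∑ 1 / (r_k v_k v_{k+1})`, hence decreases to `0`. Summing by parts gives
`R_n = w_n J_n - ∑_{k ≥ n} (w_k - w_{k+1}) J_{k+1}`, where the series converges absolutely
and each of the two terms is at most `A_n w_n` in norm.
-/

open Filter Topology Finset

/-- For `m < n` the inner supremum `⨆ _ : m ≥ n, f m` is the junk value `sSup ∅ = 0`. -/
theorem le_ciSup_ge_of_bddAbove {f : ℕ → ℝ} (hf : BddAbove (Set.range f)) {n m : ℕ}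
    (hm : n ≤ m) : f m ≤ ⨆ m ≥ n, f m := by
  obtain ⟨C, hC⟩ := hf
  have hbdd : BddAbove (Set.range fun m => ⨆ _ : m ≥ n, f m) := by
    refine ⟨max C 0, ?_⟩
    rintro _ ⟨k, rfl⟩
    exact Real.iSup_le (fun _ => le_max_of_le_left (hC ⟨k, rfl⟩)) (le_max_right _ _)
  exact le_ciSup_of_le hbdd m (by rw [ciSup_pos hm])

section AbelSummation

variable {E : Type*} [NormedAddCommGroup E] [NormedSpace ℝ E]

theorem sum_range_smul_sub_succ (w : ℕ → ℝ) (T : ℕ → E) (N : ℕ) :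
    ∑ k ∈ range N, w k • (T k - T (k + 1)) =
      w 0 • T 0 - w N • T N - ∑ k ∈ range N, (w k - w (k + 1)) • T (k + 1) := by
  rw [← sum_range_sub' (fun k => w k • T k), ← sum_sub_distrib]
  refine sum_congr rfl fun k _ => ?_
  simp only [smul_sub, sub_smul]
  abel

theorem Antitone.hasSum_sub_succ {w : ℕ → ℝ} (hw : Antitone w)
    (hw0 : Tendsto w atTop (𝓝 0)) :
    HasSum (fun k => w k - w (k + 1)) (w 0) := by
  rw [hasSum_iff_tendsto_nat_of_nonneg fun k => sub_nonneg.2 (hw k.le_succ)]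
  simpa only [sum_range_sub', sub_zero] using tendsto_const_nhds.sub hw0

theorem Antitone.exists_tendsto_sum_smul_sub_succ [CompleteSpace E] {w : ℕ → ℝ}
    {T : ℕ → E} {A : ℝ} (hw : Antitone w) (hw0 : Tendsto w atTop (𝓝 0))
    (hT : Tendsto T atTop (𝓝 0)) (hA : ∀ m, ‖T m‖ ≤ A) :
    ∃ R, Tendsto (fun N => ∑ k ∈ range N, w k • (T k - T (k + 1))) atTop (𝓝 R) ∧
      ‖R‖ ≤ 2 * A * w 0 := by
  have hg := hw.hasSum_sub_succ hw0
  have hnorm : ∀ k, ‖(w k - w (k + 1)) • T (k + 1)‖ ≤ A * (w k - w (k + 1)) := fun k => by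
    rw [norm_smul, Real.norm_of_nonneg (sub_nonneg.2 (hw k.le_succ)), mul_comm]
    exact mul_le_mul_of_nonneg_right (hA _) (sub_nonneg.2 (hw k.le_succ))
  have hsum : Summable fun k => (w k - w (k + 1)) • T (k + 1) :=
    Summable.of_norm_bounded (hg.summable.mul_left A) hnorm
  refine ⟨w 0 • T 0 - ∑' k, (w k - w (k + 1)) • T (k + 1), ?_, ?_⟩
  · have hwT : Tendsto (fun N => w N • T N) atTop (𝓝 0) := by simpa using hw0.smul hT
    simpa only [sum_range_smul_sub_succ, sub_zero] using
      (tendsto_const_nhds.sub hwT).sub hsum.hasSum.tendsto_sum_nat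
  · have hw00 : 0 ≤ w 0 := hw.le_of_tendsto hw0 0
    have h₀ : ‖w 0 • T 0‖ ≤ A * w 0 := by
      rw [norm_smul, Real.norm_of_nonneg hw00, mul_comm]
      exact mul_le_mul_of_nonneg_right (hA 0) hw00
    have h₁ := tsum_of_norm_bounded (hg.mul_left A) hnorm
    linarith [norm_sub_le (w 0 • T 0) (∑' k, (w k - w (k + 1)) • T (k + 1))]

theorem Antitone.exists_tendsto_sum_smul_sub_succ_nat_add [CompleteSpace E] {w : ℕ → ℝ}
    {T : ℕ → E} (hw : Antitone w) (hw0 : Tendsto w atTop (𝓝 0))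
    (hT : Tendsto T atTop (𝓝 0)) (n : ℕ) :
    ∃ R, Tendsto (fun N => ∑ k ∈ range N, w (n + k) • (T (n + k) - T (n + k + 1)))
        atTop (𝓝 R) ∧
      ‖R‖ ≤ 2 * (⨆ m ≥ n, ‖T m‖) * w n := by
  have hshift : Tendsto (n + ·) atTop atTop :=
    tendsto_atTop_mono (fun m => Nat.le_add_left m n) tendsto_id
  simpa only [Function.comp_apply, add_zero, add_assoc] using
    (hw.comp_monotone fun _ _ h => Nat.add_le_add_left h n).exists_tendsto_sum_smul_sub_succ
      (hw0.comp hshift) (hT.comp hshift)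
      fun m => le_ciSup_ge_of_bddAbove hT.norm.bddAbove_range (Nat.le_add_right n m)

end AbelSummation

theorem antitone_tsum_nat_add {g : ℕ → ℝ} (hg : Summable g) (hg0 : ∀ k, 0 ≤ g k) :
    Antitone fun n => ∑' k, g (n + k) := by
  refine antitone_nat_of_succ_le fun n => ?_
  have hn : Summable fun k => g (n + k) := by
    simpa only [add_comm] using (summable_nat_add_iff n).2 hg
  rw [hn.tsum_eq_zero_add]
  simpa only [add_zero, add_assoc, add_comm 1] using le_add_of_nonneg_left (hg0 n)

theorem tendsto_tsum_nat_add_atTop_zero (g : ℕ → ℝ) :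
    Tendsto (fun n => ∑' k, g (n + k)) atTop (𝓝 0) := by
  simpa only [add_comm] using tendsto_sum_nat_add g

theorem stmt_6_general (r u v : ℕ → ℝ) (σ : ℕ → ℂ)
    (hr : ∀ n, 0 < r n) (hu : ∀ n, 0 < u n) (hv : ∀ n, 0 < v n)
    (hS : Summable (fun k : ℕ => 1 / (r k * v k * v (k + 1))))
    (hratio : ∀ n, u n / v n = ∑' k : ℕ, 1 / (r (n + k) * v (n + k) * v (n + k + 1)))
    (J : ℂ)
    (hJ : Tendsto (fun N : ℕ => ∑ k ∈ Finset.range N, σ k * (u k : ℂ) * (v k : ℂ))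
      atTop (nhds J)) :
    ∀ n : ℕ, ∃ R : ℂ,
      Tendsto (fun N : ℕ => ∑ k ∈ Finset.range N, σ (n + k) * (u (n + k) : ℂ) ^ 2)
        atTop (nhds R) ∧
      ‖((v n / u n : ℝ) : ℂ) * R‖
        ≤ 2 * ⨆ m ≥ n, ‖
            (J - ∑ k ∈ Finset.range m, σ k * (u k : ℂ) * (v k : ℂ))‖ := by
  intro n
  set T := fun m => J - ∑ k ∈ range m, σ k * (u k : ℂ) * (v k : ℂ) with hTdef
  have hT : Tendsto T atTop (𝓝 0) := by simpa using hJ.const_sub J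
  have hT_sub_succ : ∀ m, T m - T (m + 1) = σ m * (u m : ℂ) * (v m : ℂ) := fun m => by
    simp only [hTdef, sum_range_succ]
    ring
  have hq : (fun m => u m / v m) = fun m => ∑' k, 1 / (r (m + k) * v (m + k) * v (m + k + 1)) :=
    funext hratio
  have hg0 : ∀ k, 0 ≤ 1 / (r k * v k * v (k + 1)) := fun k => by
    have := hr k; have := hv k; have := hv (k + 1); positivity
  have hq_anti : Antitone fun m => u m / v m := hq ▸ antitone_tsum_nat_add hS hg0
  have hq0 : Tendsto (fun m => u m / v m) atTop (𝓝 0) :=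
    hq ▸ tendsto_tsum_nat_add_atTop_zero fun k => 1 / (r k * v k * v (k + 1))
  obtain ⟨R, hR, hRA⟩ := hq_anti.exists_tendsto_sum_smul_sub_succ_nat_add hq0 hT n
  have hterm : ∀ k, (u (n + k) / v (n + k)) • (T (n + k) - T (n + k + 1)) =
      σ (n + k) * (u (n + k) : ℂ) ^ 2 := fun k => by
    have hvk : (v (n + k) : ℂ) ≠ 0 := Complex.ofReal_ne_zero.2 (hv _).ne'
    rw [hT_sub_succ, Complex.real_smul]
    push_cast
    field_simp
  refine ⟨R, by simpa only [hterm] using hR, ?_⟩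
  have hvu : 0 ≤ v n / u n := (div_pos (hv n) (hu n)).le
  calc ‖((v n / u n : ℝ) : ℂ) * R‖ = v n / u n * ‖R‖ := by
        rw [norm_mul, Complex.norm_real, Real.norm_of_nonneg hvu]
    _ ≤ v n / u n * (2 * (⨆ m ≥ n, ‖T m‖) * (u n / v n)) :=
        mul_le_mul_of_nonneg_left hRA hvu
    _ = 2 * ⨆ m ≥ n, ‖T m‖ := by
        field_simp [(hu n).ne', (hv n).ne']

/-- Assertion 1: if J = ∑ σ_n u_n v_n converges (possibly conditionally),
then each tail R_n = ∑_{k=n}^∞ σ_k u_k² converges and C_n = (v_n/u_n) R_n satisfies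
|C_n| ≤ 2 A_n, where A_n = sup_{m≥n} |J_m| and J_m = J - ∑_{k<m} σ_k u_k v_k. -/
theorem stmt_6 (r u v : ℕ → ℝ) (σ : ℕ → ℂ)
    (hr : ∀ n, 0 < r n) (hu : ∀ n, 0 < u n) (hv : ∀ n, 0 < v n)
    (hw : ∀ n, r n * (v (n + 1) * u n - u (n + 1) * v n) = 1)
    (hdiv : ¬ Summable (fun k : ℕ => 1 / (r k * u k * u (k + 1))))
    (hS : Summable (fun k : ℕ => 1 / (r k * v k * v (k + 1))))
    (hratio : ∀ n, u n / v n = ∑' k : ℕ, 1 / (r (n + k) * v (n + k) * v (n + k + 1)))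
    (J : ℂ)
    (hJ : Tendsto (fun N : ℕ => ∑ k ∈ Finset.range N, σ k * (u k : ℂ) * (v k : ℂ))
      atTop (nhds J)) :
    ∀ n : ℕ, ∃ R : ℂ,
      Tendsto (fun N : ℕ => ∑ k ∈ Finset.range N, σ (n + k) * (u (n + k) : ℂ) ^ 2)
        atTop (nhds R) ∧
      ‖((v n / u n : ℝ) : ℂ) * R‖
        ≤ 2 * ⨆ m ≥ n, ‖
            (J - ∑ k ∈ Finset.range m, σ k * (u k : ℂ) * (v k : ℂ))‖ :=
  stmt_6_general r u v σ hr hu hv hS hratio J hJ
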